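/- arXiv:2412.00922 — 7 statements merged into one kernel-verified Lean document; each statement's English description precedes it below -/
import Mathlib

section
/- Let X ⊆ ℝⁿ, S_v ⊆ ℝ^o, let f_g : ℝⁿ × ℝ^o → ℝⁿ satisfy ‖f_g(x,v) − f_g(x̃,ṽ)‖ ≤ l_f·‖(x,v) − (x̃,ṽ)‖ for all x, x̃ ∈ X and v, ṽ ∈ S_v (with l_f > 0), let h : ℝ^o → ℝⁿ be l_h-Lipschitz on S_v (l_h > 0), and suppose there exist c_Φ ≥ 1 and λ ∈ [0,1) such that ‖Φ(x,v,t) − h(v)‖ ≤ c_Φ·‖x − h(v)‖·λ^t for all x ∈ X, v ∈ S_v, t ∈ ℕ. Then there exist a function V : ℝⁿ × S_v → [0,∞) and constants λ₂ ≥ λ₁ > 0, λ₃ > 0, l_V > 0 such that: (i) λ₁‖x − h(v)‖ ≤ V(x,v) ≤ λ₂‖x − h(v)‖ for all x ∈ X, v ∈ S_v; (ii) V(f_g(x,v), v) − V(x,v) ≤ −λ₃‖x − h(v)‖ for all x ∈ X, v ∈ S_v; and (iii) |V(x,v) − V(x,ṽ)| ≤ l_V·‖v − ṽ‖ for all x ∈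 X and v, ṽ ∈ S_v such that Φ(x,v,t) ∈ X and Φ(x,ṽ,t) ∈ X for all t ∈ ℕ. -/
open Finset

/-- Euclidean norm of a concatenated pair of vectors. -/
noncomputable def pairNorm {n o : ℕ} (x : EuclideanSpace ℝ (Fin n))
    (v : EuclideanSpace ℝ (Fin o)) : ℝ :=
  Real.sqrt (‖x‖ ^ 2 + ‖v‖ ^ 2)

/-- Iteration of the closed loop `f_g` with frozen reference input `v`:
`Φ(x,v,0) = x`, `Φ(x,v,t+1) = f_g(Φ(x,v,t), v)`. -/
def Phi {n o : ℕ}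
    (fg : EuclideanSpace ℝ (Fin n) → EuclideanSpace ℝ (Fin o) → EuclideanSpace ℝ (Fin n))
    (x : EuclideanSpace ℝ (Fin n)) (v : EuclideanSpace ℝ (Fin o)) :
    ℕ → EuclideanSpace ℝ (Fin n)
  | 0 => x
  | t + 1 => fg (Phi fg x v t) v

lemma pairNorm_le_add {n o : ℕ} (x : EuclideanSpace ℝ (Fin n))
    (v : EuclideanSpace ℝ (Fin o)) : pairNorm x v ≤ ‖x‖ + ‖v‖ := by
  have hx := norm_nonneg x
  have hv := norm_nonneg v
  have : pairNorm x v ≤ Real.sqrt ((‖x‖ + ‖v‖) ^ 2) :=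
    Real.sqrt_le_sqrt (by nlinarith)
  simpa [Real.sqrt_sq (by positivity : (0:ℝ) ≤ ‖x‖ + ‖v‖)] using this

lemma Phi_shift {n o : ℕ}
    (fg : EuclideanSpace ℝ (Fin n) → EuclideanSpace ℝ (Fin o) → EuclideanSpace ℝ (Fin n))
    (x : EuclideanSpace ℝ (Fin n)) (v : EuclideanSpace ℝ (Fin o)) (t : ℕ) :
    Phi fg (fg x v) v t = Phi fg x v (t + 1) := by
  induction t with
  | zero => rfl
  | succ t ih => simp only [Phi, ih]

/-- Recursive bound constants for Lipschitz-in-v estimate. -/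
noncomputable def Dcoef (lf : ℝ) : ℕ → ℝ
  | 0 => 0
  | t + 1 => lf * (Dcoef lf t + 1)

lemma Dcoef_nonneg (lf : ℝ) (hlf : 0 ≤ lf) : ∀ t, 0 ≤ Dcoef lf t
  | 0 => le_refl 0
  | t + 1 => by
      have := Dcoef_nonneg lf hlf t
      simp only [Dcoef]; positivity

/-- Lemma 1 of the paper: a converse Lyapunov function for the exponentially stable
closed loop which is additionally Lipschitz in the reference input. -/
theorem stmt4 {n o : ℕ} (X : Set (EuclideanSpace ℝ (Fin n)))
    (Sv : Set (EuclideanSpace ℝ (Fin o)))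
    (fg : EuclideanSpace ℝ (Fin n) → EuclideanSpace ℝ (Fin o) → EuclideanSpace ℝ (Fin n))
    (lf : ℝ) (hlf : 0 < lf)
    (hfgLip : ∀ x ∈ X, ∀ x' ∈ X, ∀ v ∈ Sv, ∀ v' ∈ Sv,
      ‖fg x v - fg x' v'‖ ≤ lf * pairNorm (x - x') (v - v'))
    (h : EuclideanSpace ℝ (Fin o) → EuclideanSpace ℝ (Fin n)) (lh : ℝ) (hlh : 0 < lh)
    (hhLip : ∀ v ∈ Sv, ∀ v' ∈ Sv, ‖h v - h v'‖ ≤ lh * ‖v - v'‖)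
    (cΦ lam : ℝ) (hcΦ : 1 ≤ cΦ) (hlam0 : 0 ≤ lam) (hlam1 : lam < 1)
    (hstab : ∀ x ∈ X, ∀ v ∈ Sv, ∀ t : ℕ, ‖Phi fg x v t - h v‖ ≤ cΦ * ‖x - h v‖ * lam ^ t) :
    ∃ (V : EuclideanSpace ℝ (Fin n) → EuclideanSpace ℝ (Fin o) → ℝ) (lam₁ lam₂ lam₃ lV : ℝ),
      0 < lam₁ ∧ lam₁ ≤ lam₂ ∧ 0 < lam₃ ∧ 0 < lV ∧
      (∀ x, ∀ v ∈ Sv, 0 ≤ V x v) ∧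
      (∀ x ∈ X, ∀ v ∈ Sv, lam₁ * ‖x - h v‖ ≤ V x v ∧ V x v ≤ lam₂ * ‖x - h v‖) ∧
      (∀ x ∈ X, ∀ v ∈ Sv, V (fg x v) v - V x v ≤ -(lam₃ * ‖x - h v‖)) ∧
      (∀ x ∈ X, ∀ v ∈ Sv, ∀ v' ∈ Sv, (∀ t : ℕ, Phi fg x v t ∈ X) →
        (∀ t : ℕ, Phi fg x v' t ∈ X) → |V x v - V x v'| ≤ lV * ‖v - v'‖) := by
  -- choose M with cΦ * lam ^ M ≤ 1/2
  have hcΦ0 : (0:ℝ) < cΦ := lt_of_lt_of_le one_pos hcΦ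
  obtain ⟨M, hM⟩ : ∃ M : ℕ, lam ^ M < 1 / (2 * cΦ) :=
    exists_pow_lt_of_lt_one (by positivity) hlam1
  have hMlam : cΦ * lam ^ M ≤ 1 / 2 := by
    have : lam ^ M * (2 * cΦ) < 1 := (lt_div_iff₀ (by positivity)).mp hM
    nlinarith [pow_nonneg hlam0 M]
  have hM1 : 1 ≤ M := by
    by_contra hc
    interval_cases M
    simp at hMlam; nlinarith
  set V : EuclideanSpace ℝ (Fin n) → EuclideanSpace ℝ (Fin o) → ℝ :=
    fun x v => ∑ t ∈ Finset.range M, ‖Phi fg x v t - h v‖ with hV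
  refine ⟨V, 1, cΦ * M, 1/2, ∑ t ∈ Finset.range M, (Dcoef lf t + lh), one_pos, ?_, by norm_num,
    ?_, ?_, ?_, ?_, ?_⟩
  · -- 1 ≤ cΦ * M
    have : (1:ℝ) ≤ (M:ℝ) := by exact_mod_cast hM1
    nlinarith
  · -- lV > 0
    apply Finset.sum_pos
    · intro t _
      have := Dcoef_nonneg lf hlf.le t
      linarith
    · exact Finset.nonempty_range_iff.mpr (by omega)
  · -- nonneg
    intro x v _
    exact Finset.sum_nonneg fun t _ => norm_nonneg _
  · -- bounds
    intro x hx v hv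
    constructor
    · have h0 : ‖Phi fg x v 0 - h v‖ = ‖x - h v‖ := rfl
      calc 1 * ‖x - h v‖ = ‖Phi fg x v 0 - h v‖ := by rw [h0, one_mul]
        _ ≤ V x v := Finset.single_le_sum (f := fun t => ‖Phi fg x v t - h v‖)
            (fun t _ => norm_nonneg _) (Finset.mem_range.mpr (by omega))
    · calc V x v ≤ ∑ t ∈ Finset.range M, cΦ * ‖x - h v‖ * lam ^ t :=
            Finset.sum_le_sum fun t _ => hstab x hx v hv t
        _ ≤ ∑ t ∈ Finset.range M, cΦ * ‖x - h v‖ * 1 := by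
            apply Finset.sum_le_sum
            intro t _
            have hle : lam ^ t ≤ 1 := pow_le_one₀ hlam0 hlam1.le
            have : (0:ℝ) ≤ cΦ * ‖x - h v‖ := by positivity
            nlinarith
        _ = cΦ * M * ‖x - h v‖ := by
            rw [Finset.sum_const, Finset.card_range]; ring
  · -- decrease
    intro x hx v hv
    have hshift : V (fg x v) v = ∑ t ∈ Finset.range M, ‖Phi fg x v (t + 1) - h v‖ := by
      apply Finset.sum_congr rfl
      intro t _
      rw [Phi_shift]
    have htel : V (fg x v) v - V x v = ‖Phi fg x v M - h v‖ - ‖x - h v‖ := by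
      rw [hshift, hV]
      rw [← Finset.sum_sub_distrib]
      rw [Finset.sum_range_sub (f := fun t => ‖Phi fg x v t - h v‖)]
      rfl
    rw [htel]
    have hst := hstab x hx v hv M
    have : cΦ * ‖x - h v‖ * lam ^ M ≤ (1/2) * ‖x - h v‖ := by
      have hn : (0:ℝ) ≤ ‖x - h v‖ := norm_nonneg _
      nlinarith
    linarith
  · -- Lipschitz in v
    intro x hx v hv v' hv' hXv hXv'
    -- state-difference bound
    have hdiff : ∀ t, ‖Phi fg x v t - Phi fg x v' t‖ ≤ Dcoef lf t * ‖v - v'‖ := by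
      intro t
      induction t with
      | zero => simp [Phi, Dcoef]
      | succ t ih =>
          have hlip := hfgLip (Phi fg x v t) (hXv t) (Phi fg x v' t) (hXv' t) v hv v' hv'
          have hpn := pairNorm_le_add (Phi fg x v t - Phi fg x v' t) (v - v')
          calc ‖Phi fg x v (t+1) - Phi fg x v' (t+1)‖
              ≤ lf * pairNorm (Phi fg x v t - Phi fg x v' t) (v - v') := hlip
            _ ≤ lf * (‖Phi fg x v t - Phi fg x v' t‖ + ‖v - v'‖) := by nlinarith
            _ ≤ lf * (Dcoef lf t * ‖v - v'‖ + ‖v - v'‖) := by nlinarith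
            _ = Dcoef lf (t+1) * ‖v - v'‖ := by simp only [Dcoef]; ring
    have hterm : ∀ t, |‖Phi fg x v t - h v‖ - ‖Phi fg x v' t - h v'‖| ≤
        (Dcoef lf t + lh) * ‖v - v'‖ := by
      intro t
      have h1 : |‖Phi fg x v t - h v‖ - ‖Phi fg x v' t - h v'‖| ≤
          ‖(Phi fg x v t - h v) - (Phi fg x v' t - h v')‖ := abs_norm_sub_norm_le _ _
      have h2 : ‖(Phi fg x v t - h v) - (Phi fg x v' t - h v')‖ ≤
          ‖Phi fg x v t - Phi fg x v' t‖ + ‖h v - h v'‖ := by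
        have : (Phi fg x v t - h v) - (Phi fg x v' t - h v') =
            (Phi fg x v t - Phi fg x v' t) - (h v - h v') := by abel
        rw [this]
        exact norm_sub_le _ _
      have h3 := hdiff t
      have h4 := hhLip v hv v' hv'
      calc |‖Phi fg x v t - h v‖ - ‖Phi fg x v' t - h v'‖| ≤
          ‖Phi fg x v t - Phi fg x v' t‖ + ‖h v - h v'‖ := le_trans h1 h2
        _ ≤ Dcoef lf t * ‖v - v'‖ + lh * ‖v - v'‖ := add_le_add h3 h4
        _ = (Dcoef lf t + lh) * ‖v - v'‖ := by ring
    calc |V x v - V x v'|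
        = |∑ t ∈ Finset.range M, (‖Phi fg x v t - h v‖ - ‖Phi fg x v' t - h v'‖)| := by
          rw [hV, Finset.sum_sub_distrib]
      _ ≤ ∑ t ∈ Finset.range M, |‖Phi fg x v t - h v‖ - ‖Phi fg x v' t - h v'‖| :=
          Finset.abs_sum_le_sum_abs _ _
      _ ≤ ∑ t ∈ Finset.range M, (Dcoef lf t + lh) * ‖v - v'‖ :=
          Finset.sum_le_sum fun t _ => hterm t
      _ = (∑ t ∈ Finset.range M, (Dcoef lf t + lh)) * ‖v - v'‖ := by
          rw [← Finset.sum_mul]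
end

section
/- Let (x_t)_{t∈ℕ} be a sequence in ℝⁿ, (v_t)_{t∈ℕ} a sequence in ℝ^o, h : ℝ^o → ℝⁿ, and V a real-valued function of (x,v) with constants λ₂ > 0, λ₃ ∈ (0, λ₂], l_V > 0 such that for all t ≥ 1: V(x_t, v_{t−1}) ≤ V(x_{t−1}, v_{t−1}) − λ₃·‖x_{t−1} − h(v_{t−1})‖, V(x_{t−1}, v_{t−1}) ≤ λ₂·‖x_{t−1} − h(v_{t−1})‖, and |V(x_t, v_t) − V(x_t, v_{t−1})| ≤ l_V·‖v_t − v_{t−1}‖. Set λ̃ := 1 − λ₃/λ₂ ∈ [0,1). Then for all τ₁, τ₂ ∈ ℕ with τ₂ ≥ τ₁: V(x_{τ₂}, v_{τ₂}) ≤ λ̃^{τ₂−τ₁}·V(x_{τ₁}, v_{τ₁}) + l_V·Σ_{i=τ₁+1}^{τ₂} ‖v_i − v_{i−1}‖·λ̃^{τ₂−i}. -/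
open Finset

/-- The recursion inequality of Lemma 2 of the paper, stated along a closed-loop trajectory. -/
theorem stmt8 {n o : ℕ} (x : ℕ → EuclideanSpace ℝ (Fin n))
    (v : ℕ → EuclideanSpace ℝ (Fin o))
    (h : EuclideanSpace ℝ (Fin o) → EuclideanSpace ℝ (Fin n))
    (V : EuclideanSpace ℝ (Fin n) → EuclideanSpace ℝ (Fin o) → ℝ)
    (lam₂ lam₃ lV : ℝ) (hlam₂ : 0 < lam₂) (hlam₃0 : 0 < lam₃) (hlam₃ : lam₃ ≤ lam₂)
    (hlV : 0 < lV)
    (hdec : ∀ t, 1 ≤ t →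
      V (x t) (v (t - 1)) ≤ V (x (t - 1)) (v (t - 1)) - lam₃ * ‖x (t - 1) - h (v (t - 1))‖)
    (hub : ∀ t, 1 ≤ t → V (x (t - 1)) (v (t - 1)) ≤ lam₂ * ‖x (t - 1) - h (v (t - 1))‖)
    (hLip : ∀ t, 1 ≤ t → |V (x t) (v t) - V (x t) (v (t - 1))| ≤ lV * ‖v t - v (t - 1)‖) :
    ∀ τ₁ τ₂ : ℕ, τ₁ ≤ τ₂ →
      V (x τ₂) (v τ₂) ≤ (1 - lam₃ / lam₂) ^ (τ₂ - τ₁) * V (x τ₁) (v τ₁) +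
        lV * ∑ i ∈ Finset.Icc (τ₁ + 1) τ₂, ‖v i - v (i - 1)‖ * (1 - lam₃ / lam₂) ^ (τ₂ - i) := by
  set lam : ℝ := 1 - lam₃ / lam₂ with hlam
  have hlam0 : 0 ≤ lam := by
    have : lam₃ / lam₂ ≤ 1 := (div_le_one hlam₂).mpr hlam₃
    rw [hlam]; linarith
  -- one-step recursion
  have step : ∀ k : ℕ, V (x (k + 1)) (v (k + 1)) ≤
      lam * V (x k) (v k) + lV * ‖v (k + 1) - v k‖ := by
    intro k
    have h1 := hdec (k + 1) (Nat.le_add_left 1 k)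
    have h2 := hub (k + 1) (Nat.le_add_left 1 k)
    have h3 := hLip (k + 1) (Nat.le_add_left 1 k)
    simp only [Nat.add_sub_cancel] at h1 h2 h3
    have hmul : (lam₃ / lam₂) * V (x k) (v k) ≤ lam₃ * ‖x k - h (v k)‖ := by
      have := mul_le_mul_of_nonneg_left h2 (le_of_lt (div_pos hlam₃0 hlam₂))
      calc (lam₃ / lam₂) * V (x k) (v k) ≤ (lam₃ / lam₂) * (lam₂ * ‖x k - h (v k)‖) := this
        _ = lam₃ * ‖x k - h (v k)‖ := by field_simp
    have h4 : V (x (k + 1)) (v k) ≤ lam * V (x k) (v k) := by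
      rw [hlam]; nlinarith
    have h5 := abs_le.mp h3
    linarith [h5.2]
  intro τ₁ τ₂ hle
  induction τ₂, hle using Nat.le_induction with
  | base =>
      simp
  | succ k hk ih =>
      have hsum : ∑ i ∈ Finset.Icc (τ₁ + 1) (k + 1), ‖v i - v (i - 1)‖ * lam ^ (k + 1 - i)
          = (∑ i ∈ Finset.Icc (τ₁ + 1) k, ‖v i - v (i - 1)‖ * lam ^ (k + 1 - i))
            + ‖v (k + 1) - v k‖ := by
        rw [Finset.sum_Icc_succ_top (by omega), Nat.sub_self, pow_zero, mul_one,
          Nat.add_sub_cancel]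
      have key : V (x (k + 1)) (v (k + 1)) ≤ lam * V (x k) (v k) + lV * ‖v (k + 1) - v k‖ :=
        step k
      have ih' := mul_le_mul_of_nonneg_left ih hlam0
      have hpow : lam * lam ^ (k - τ₁) = lam ^ (k + 1 - τ₁) := by
        rw [← pow_succ']
        congr 1
        omega
      have hsum2 : lam * ∑ i ∈ Finset.Icc (τ₁ + 1) k, ‖v i - v (i - 1)‖ * lam ^ (k - i)
          = ∑ i ∈ Finset.Icc (τ₁ + 1) k, ‖v i - v (i - 1)‖ * lam ^ (k + 1 - i) := by
        rw [Finset.mul_sum]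
        apply Finset.sum_congr rfl
        intro i hi
        simp only [Finset.mem_Icc] at hi
        have : lam ^ (k + 1 - i) = lam * lam ^ (k - i) := by
          rw [← pow_succ']; congr 1; omega
        rw [this]; ring
      rw [hsum]
      calc V (x (k + 1)) (v (k + 1)) ≤ lam * V (x k) (v k) + lV * ‖v (k + 1) - v k‖ := key
        _ ≤ lam * (lam ^ (k - τ₁) * V (x τ₁) (v τ₁) +
              lV * ∑ i ∈ Finset.Icc (τ₁ + 1) k, ‖v i - v (i - 1)‖ * lam ^ (k - i))
            + lV * ‖v (k + 1) - v k‖ := by linarith [ih']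
        _ = lam ^ (k + 1 - τ₁) * V (x τ₁) (v τ₁) +
            lV * ((∑ i ∈ Finset.Icc (τ₁ + 1) k, ‖v i - v (i - 1)‖ * lam ^ (k + 1 - i))
              + ‖v (k + 1) - v k‖) := by
          rw [← hpow, ← hsum2]; ring
end

section
/- Let (x_t)_{t∈ℕ} in ℝⁿ, (v_t)_{t∈ℕ} in ℝ^o, h : ℝ^o → ℝⁿ, and V a real-valued function of (x,v) with constants λ₂ > 0, λ₃ ∈ (0, λ₂], l_V > 0 such that for all t ≥ 1: V(x_t, v_{t−1}) ≤ V(x_{t−1}, v_{t−1}) − λ₃·‖x_{t−1} − h(v_{t−1})‖, V(x_{t−1}, v_{t−1}) ≤ λ₂·‖x_{t−1} − h(v_{t−1})‖, and |V(x_t, v_t) − V(x_t, v_{t−1})| ≤ l_V·‖v_t − v_{t−1}‖. Suppose moreover ‖v_t − v_{t−1}‖ ≤ d for all t ≥ 1, with d ≥ 0. Then, with λ̃ := 1 − λ₃/λ₂, for every t ∈ ℕ: V(x_t, v_t) ≤ λ₂·‖x_0 − h(v_0)‖ + l_V·d/(1 − λ̃). -/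
open Finset

/-- The uniform boundedness statement of Lemma 2 of the paper, with the explicit bound
`V̄ = λ₂‖x₀ − h(v₀)‖ + l_V d/(1 − λ̃)`, `λ̃ = 1 − λ₃/λ₂`. -/
theorem stmt9 {n o : ℕ} (x : ℕ → EuclideanSpace ℝ (Fin n))
    (v : ℕ → EuclideanSpace ℝ (Fin o))
    (h : EuclideanSpace ℝ (Fin o) → EuclideanSpace ℝ (Fin n))
    (V : EuclideanSpace ℝ (Fin n) → EuclideanSpace ℝ (Fin o) → ℝ)
    (lam₂ lam₃ lV : ℝ) (hlam₂ : 0 < lam₂) (hlam₃0 : 0 < lam₃) (hlam₃ : lam₃ ≤ lam₂)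
    (hlV : 0 < lV)
    (hdec : ∀ t, 1 ≤ t →
      V (x t) (v (t - 1)) ≤ V (x (t - 1)) (v (t - 1)) - lam₃ * ‖x (t - 1) - h (v (t - 1))‖)
    (hub : ∀ t, 1 ≤ t → V (x (t - 1)) (v (t - 1)) ≤ lam₂ * ‖x (t - 1) - h (v (t - 1))‖)
    (hLip : ∀ t, 1 ≤ t → |V (x t) (v t) - V (x t) (v (t - 1))| ≤ lV * ‖v t - v (t - 1)‖)
    (d : ℝ) (hd : 0 ≤ d) (hvd : ∀ t, 1 ≤ t → ‖v t - v (t - 1)‖ ≤ d) :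
    ∀ t : ℕ, V (x t) (v t) ≤
      lam₂ * ‖x 0 - h (v 0)‖ + lV * d / (1 - (1 - lam₃ / lam₂)) := by
  have hratio : 0 < lam₃ / lam₂ := div_pos hlam₃0 hlam₂
  have hsimp : (1 : ℝ) - (1 - lam₃ / lam₂) = lam₃ / lam₂ := by ring
  simp only [hsimp]
  have hN : 0 ≤ ‖x 0 - h (v 0)‖ := norm_nonneg _
  have hB0 : 0 ≤ lV * d / (lam₃ / lam₂) := by positivity
  have hkey : lV * d ≤ (lam₃ / lam₂) * (lam₂ * ‖x 0 - h (v 0)‖ + lV * d / (lam₃ / lam₂)) := by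
    have h1 : (lam₃ / lam₂) * (lam₂ * ‖x 0 - h (v 0)‖ + lV * d / (lam₃ / lam₂))
        = (lam₃ / lam₂) * (lam₂ * ‖x 0 - h (v 0)‖) + lV * d := by
      field_simp
    have h2' : 0 ≤ (lam₃ / lam₂) * (lam₂ * ‖x 0 - h (v 0)‖) := by positivity
    linarith
  intro t
  induction t with
  | zero =>
    have := hub 1 le_rfl
    simp only [Nat.sub_self] at this
    linarith
  | succ t ih =>
    have h1 := hdec (t + 1) (Nat.le_add_left 1 t)
    have h2 := hub (t + 1) (Nat.le_add_left 1 t)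
    have h3 := hLip (t + 1) (Nat.le_add_left 1 t)
    have h4 := hvd (t + 1) (Nat.le_add_left 1 t)
    simp only [Nat.add_sub_cancel] at h1 h2 h3 h4
    have habs := (abs_le.mp h3).2
    have h6 : lV * ‖v (t+1) - v t‖ ≤ lV * d := mul_le_mul_of_nonneg_left h4 (le_of_lt hlV)
    have hnorm : (lam₃ / lam₂) * V (x t) (v t) ≤ lam₃ * ‖x t - h (v t)‖ := by
      have : (lam₃ / lam₂) * V (x t) (v t) ≤ (lam₃ / lam₂) * (lam₂ * ‖x t - h (v t)‖) :=
        mul_le_mul_of_nonneg_left h2 (le_of_lt hratio)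
      have heq : (lam₃ / lam₂) * (lam₂ * ‖x t - h (v t)‖) = lam₃ * ‖x t - h (v t)‖ := by
        rw [← mul_assoc, div_mul_cancel₀ _ (ne_of_gt hlam₂)]
      linarith [heq ▸ this]
    -- V(x_{t+1},v_{t+1}) ≤ (1 - λ₃/λ₂) V(x_t,v_t) + lV d
    have hstep : V (x (t+1)) (v (t+1)) ≤ (1 - lam₃ / lam₂) * V (x t) (v t) + lV * d := by
      nlinarith
    have hlt : 0 ≤ 1 - lam₃ / lam₂ := by
      have : lam₃ / lam₂ ≤ 1 := (div_le_one hlam₂).mpr hlam₃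
      linarith
    have hmono : (1 - lam₃ / lam₂) * V (x t) (v t) ≤
        (1 - lam₃ / lam₂) * (lam₂ * ‖x 0 - h (v 0)‖ + lV * d / (lam₃ / lam₂)) :=
      mul_le_mul_of_nonneg_left ih hlt
    nlinarith
end

section
/- Let S̄_v ⊆ ℝ^o be compact, X ⊆ ℝⁿ, and O ⊆ X × S̄_v; write O_x(v) := {x : (x,v) ∈ O} and O_v(x) := {v ∈ S̄_v : (x,v) ∈ O}. Let h : ℝ^o → ℝⁿ be l_h-Lipschitz on S̄_v (l_h > 0), and let δ > 0 be such that for every v ∈ S̄_v, every x ∈ X with ‖x − h(v)‖ ≤ δ satisfies (x,v) ∈ O. Let ρ : [0,∞) → [0,1] be continuous, strictly increasing, with ρ(0) = 0. Let V be a real-valued function of (x,v) and constants 0 < λ₁ ≤ λ₂, λ₃ ∈ (0, λ₂], l_V > 0, V̄ > 0. Let (x_t) ⊆ X, (v_t), (r_t) ⊆ S̄_v be sequences such that for all t: (x_t, v_t) ∈ O; λ₁‖x_t − h(v)‖ ≤ V(x_t, v) ≤ λ₂‖x_t − h(v)‖ for all v ∈ S̄_v; V(x_t, v_t) ≤ V̄;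 and for all t ≥ 1: V(x_t, v_{t−1}) ≤ V(x_{t−1}, v_{t−1}) − λ₃‖x_{t−1} − h(v_{t−1})‖; |V(x_t, u) − V(x_t, w)| ≤ l_V‖u − w‖ for all u, w ∈ S̄_v; and either r_t ∈ O_v(x_t) and v_t = r_t, or r_t ∉ O_v(x_t) and ‖v_t − v_{t−1}‖ ≥ ν̄_t, where ν̄_t := sup{ν ≥ 0 : every v ∈ S̄_v with ‖v − v_{t−1}‖ ≤ ν satisfies (x_t, v) ∈ O}. Then there exist M ∈ ℕ and ε ∈ (0,1] lying in the range of ρ, such that for all t ≥ 1: Π_{i=t}^{t+M} (1 − ρ(α_i)) ≤ 1 − ε, where α_i := ρ⁻¹(ε) if r_i = v_i, and α_i := ‖v_i − v_{i−1}‖ otherwise. -/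
open scoped Classical

open Finset

/-!
Along the window `t, …, t + M`, suppose no reference is accepted and every reference step is
shorter than `β`. Between updates the Lyapunov function contracts by `1 - λ₃/λ₂`, and each
update raises it by at most `l_V β`, so at the end of the window it is at most
`(1 - λ₃/λ₂)^(M+1) V̄ + l_V β λ₂/λ₃`, which for `β` small and `M` large forces
`‖x_{t+M} - h(v_{t+M-1})‖ ≤ δ/2`. By the Lipschitz bound on `h`, every `v` within `β` of
`v_{t+M-1}` is then admissible, so `ν̄_{t+M} ≥ β > ‖v_{t+M} - v_{t+M-1}‖ ≥ ν̄_{t+M}`, which is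
absurd. Hence some factor of the product is at most `1 - ρ(β)`, and the others are at most `1`.
-/

theorem prod_one_sub_le_one_sub_of_le {ι : Type*} {ρ : ℝ → ℝ}
    (hρmono : MonotoneOn ρ (Set.Ici 0)) (hρ : ∀ s, 0 ≤ s → 0 ≤ ρ s ∧ ρ s ≤ 1) {s : Finset ι}
    {α : ι → ℝ} (hα : ∀ i ∈ s, 0 ≤ α i) {i₀ : ι} (hi₀ : i₀ ∈ s) {β : ℝ} (hβ : 0 ≤ β) (hβα : β ≤ α i₀) :
    ∏ i ∈ s, (1 - ρ (α i)) ≤ 1 - ρ β := by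
  calc ∏ i ∈ s, (1 - ρ (α i)) ≤ ∏ i ∈ {i₀}, (1 - ρ (α i)) :=
        prod_le_prod_of_subset_of_le_one (singleton_subset_iff.2 hi₀)
          (fun i hi => by linarith [(hρ _ (hα i hi)).2])
          fun i hi _ => by linarith [(hρ _ (hα i hi)).1]
    _ ≤ 1 - ρ β := by
      rw [prod_singleton]
      linarith [hρmono hβ (hα i₀ hi₀) hβα]

theorem le_one_sub_div_mul_of_le_sub {a b d l₂ l₃ : ℝ} (hl₂ : 0 < l₂) (hl₃ : 0 ≤ l₃)
    (ha : a ≤ b - l₃ * d) (hb : b ≤ l₂ * d) : a ≤ (1 - l₃ / l₂) * b := by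
  have hbd : b / l₂ ≤ d := (div_le_iff₀ hl₂).2 (by linarith)
  calc a ≤ b - l₃ * d := ha
    _ ≤ b - l₃ * (b / l₂) := by gcongr
    _ = (1 - l₃ / l₂) * b := by ring

theorem sub_le_pow_mul_sub_of_le_mul_add {W : ℕ → ℝ} {q c D : ℝ} {N : ℕ} (hq : 0 ≤ q)
    (hD : q * D + c ≤ D) (hW : ∀ k < N, W (k + 1) ≤ q * W k + c) :
    ∀ k ≤ N, W k - D ≤ q ^ k * (W 0 - D) := by
  intro k hk
  induction k with
  | zero => simp
  | succ k ih =>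
    calc W (k + 1) - D ≤ q * (W k - D) := by linarith [hW k hk]
      _ ≤ q * (q ^ k * (W 0 - D)) := by gcongr; exact ih (by omega)
      _ = q ^ (k + 1) * (W 0 - D) := by ring

theorem lyapunov_le_of_small_steps {E F : Type*} [SeminormedAddCommGroup F]
    {V : E → F → ℝ} {x : ℕ → E} {v : ℕ → F} {p c β B : ℝ} {s M : ℕ} (hp0 : 0 < p)
    (hp1 : p ≤ 1) (hc : 0 ≤ c) (hβ : 0 ≤ β) (hB : V (x s) (v s) ≤ B)
    (hcontr : ∀ i, V (x (i + 1)) (v i) ≤ (1 - p) * V (x i) (v i))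
    (hupdate : ∀ i, V (x (i + 1)) (v (i + 1)) ≤ V (x (i + 1)) (v i) + c * ‖v (i + 1) - v i‖)
    (hsmall : ∀ k < M, ‖v (s + k + 1) - v (s + k)‖ ≤ β) :
    V (x (s + M + 1)) (v (s + M)) ≤ (1 - p) ^ (M + 1) * B + c * β / p := by
  have hq : 0 ≤ 1 - p := by linarith
  have hD0 : 0 ≤ c * β / p := by positivity
  have hD : (1 - p) * (c * β / p) + c * β ≤ c * β / p := le_of_eq (by field_simp; ring)
  have hstep (k : ℕ) (hk : k < M) : V (x (s + (k + 1))) (v (s + (k + 1))) ≤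
      (1 - p) * V (x (s + k)) (v (s + k)) + c * β := by
    rw [← add_assoc]
    linarith [hupdate (s + k), hcontr (s + k), mul_le_mul_of_nonneg_left (hsmall k hk) hc]
  have hM := sub_le_pow_mul_sub_of_le_mul_add (W := fun k => V (x (s + k)) (v (s + k))) hq hD
    hstep M le_rfl
  have hqM : 0 ≤ (1 - p) ^ (M + 1) := pow_nonneg hq _
  calc V (x (s + M + 1)) (v (s + M)) ≤ (1 - p) * V (x (s + M)) (v (s + M)) := hcontr (s + M)
    _ ≤ (1 - p) * ((1 - p) ^ M * (V (x s) (v s) - c * β / p) + c * β / p) := by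
        gcongr; simpa using hM
    _ = (1 - p) ^ (M + 1) * (V (x s) (v s) - c * β / p) + (1 - p) * (c * β / p) := by ring
    _ ≤ (1 - p) ^ (M + 1) * B + c * β / p := by gcongr <;> linarith [mul_nonneg hc hβ]

theorem exists_step_and_horizon {p c l ε δ B : ℝ} (hp0 : 0 < p) (hp1 : p ≤ 1) (hc : 0 < c)
    (hl : 0 < l) (hε : 0 < ε) (hδ : 0 < δ) :
    ∃ β > 0, ∃ M : ℕ, (1 - p) ^ (M + 1) * B + c * β / p ≤ ε ∧ l * β ≤ δ := by
  have hdecay : Filter.Tendsto (fun M : ℕ => (1 - p) ^ (M + 1) * B) Filter.atTop (nhds 0) := by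
    simpa using ((tendsto_pow_atTop_nhds_zero_of_lt_one (by linarith) (by linarith)).comp
      (Filter.tendsto_add_atTop_nat 1)).mul_const B
  obtain ⟨M, hM⟩ := (hdecay.eventually_lt_const (half_pos hε)).exists
  set β := min (ε * p / (2 * c)) (δ / l)
  have hβε : β * (2 * c) ≤ ε * p := (le_div_iff₀ (by positivity)).1 (min_le_left _ _)
  have hβδ : l * β ≤ δ := (le_div_iff₀' hl).1 (min_le_right _ _)
  refine ⟨β, lt_min (by positivity) (by positivity), M, ?_, hβδ⟩
  have : c * β / p ≤ ε / 2 := (div_le_iff₀ hp0).2 (by linarith)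
  linarith

/-- The admissible step `ν̄_t` of the paper is `sSup (admissibleRadii O S̄_v x_t v_{t-1})`. -/
def admissibleRadii {E F : Type*} [SeminormedAddCommGroup F] (O : Set (E × F)) (S : Set F)
    (x : E) (v₀ : F) : Set ℝ :=
  {ν | 0 ≤ ν ∧ ∀ w ∈ S, ‖w - v₀‖ ≤ ν → (x, w) ∈ O}

section admissibleRadii

variable {E F : Type*} [SeminormedAddCommGroup F]
  {O : Set (E × F)} {S : Set F} {x : E} {v₀ : F}

theorem bddAbove_admissibleRadii {w : F} (hw : w ∈ S) (hxw : (x, w) ∉ O) :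
    BddAbove (admissibleRadii O S x v₀) :=
  ⟨‖w - v₀‖, fun _ hν => le_of_not_gt fun hlt => hxw (hν.2 w hw hlt.le)⟩

theorem mem_admissibleRadii [SeminormedAddCommGroup E] {X : Set E} {h : F → E} {l δ ν : ℝ}
    (hball : ∀ w ∈ S, ∀ y ∈ X, ‖y - h w‖ ≤ δ → (y, w) ∈ O)
    (hLip : ∀ u ∈ S, ∀ w ∈ S, ‖h u - h w‖ ≤ l * ‖u - w‖) (hl : 0 ≤ l) (hx : x ∈ X)
    (hv₀ : v₀ ∈ S) (hν : 0 ≤ ν) (hclose : ‖x - h v₀‖ + l * ν ≤ δ) :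
    ν ∈ admissibleRadii O S x v₀ := by
  refine ⟨hν, fun w hw hwv => hball w hw x hx ?_⟩
  calc ‖x - h w‖ ≤ ‖x - h v₀‖ + ‖h v₀ - h w‖ := norm_sub_le_norm_sub_add_norm_sub _ _ _
    _ ≤ ‖x - h v₀‖ + l * ‖v₀ - w‖ := by gcongr; exact hLip v₀ hv₀ w hw
    _ ≤ ‖x - h v₀‖ + l * ν := by rw [norm_sub_rev v₀ w]; gcongr
    _ ≤ δ := hclose

end admissibleRadii

theorem stmt10_general {n o : ℕ} (Sv : Set (EuclideanSpace ℝ (Fin o)))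
    (X : Set (EuclideanSpace ℝ (Fin n)))
    (O : Set (EuclideanSpace ℝ (Fin n) × EuclideanSpace ℝ (Fin o)))
    (h : EuclideanSpace ℝ (Fin o) → EuclideanSpace ℝ (Fin n)) (lh : ℝ) (hlh : 0 < lh)
    (hhLip : ∀ u ∈ Sv, ∀ w ∈ Sv, ‖h u - h w‖ ≤ lh * ‖u - w‖)
    (δ : ℝ) (hδ : 0 < δ)
    (hball : ∀ v ∈ Sv, ∀ x ∈ X, ‖x - h v‖ ≤ δ → (x, v) ∈ O)
    (ρ : ℝ → ℝ) (hρmono : StrictMonoOn ρ (Set.Ici 0))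
    (hρ0 : ρ 0 = 0) (hρrange : ∀ s, 0 ≤ s → 0 ≤ ρ s ∧ ρ s ≤ 1)
    (V : EuclideanSpace ℝ (Fin n) → EuclideanSpace ℝ (Fin o) → ℝ)
    (lam₁ lam₂ lam₃ lV Vbar : ℝ) (hlam₁ : 0 < lam₁) (hlam₁₂ : lam₁ ≤ lam₂)
    (hlam₃0 : 0 < lam₃) (hlam₃ : lam₃ ≤ lam₂) (hlV : 0 < lV)
    (x : ℕ → EuclideanSpace ℝ (Fin n)) (v r : ℕ → EuclideanSpace ℝ (Fin o))
    (hxX : ∀ t, x t ∈ X) (hvSv : ∀ t, v t ∈ Sv) (hrSv : ∀ t, r t ∈ Sv)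
    (hVbnd : ∀ t, ∀ w ∈ Sv, lam₁ * ‖x t - h w‖ ≤ V (x t) w ∧ V (x t) w ≤ lam₂ * ‖x t - h w‖)
    (hVub : ∀ t, V (x t) (v t) ≤ Vbar)
    (hdec : ∀ t, 1 ≤ t →
      V (x t) (v (t - 1)) ≤ V (x (t - 1)) (v (t - 1)) - lam₃ * ‖x (t - 1) - h (v (t - 1))‖)
    (hVLip : ∀ t, 1 ≤ t → ∀ u ∈ Sv, ∀ w ∈ Sv, |V (x t) u - V (x t) w| ≤ lV * ‖u - w‖)
    (hRG : ∀ t, 1 ≤ t →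
      ((x t, r t) ∈ O ∧ v t = r t) ∨
      ((x t, r t) ∉ O ∧
        sSup {ν : ℝ | 0 ≤ ν ∧ ∀ w ∈ Sv, ‖w - v (t - 1)‖ ≤ ν → (x t, w) ∈ O} ≤
          ‖v t - v (t - 1)‖)) :
    ∃ (M : ℕ) (ε a : ℝ), 0 < ε ∧ ε ≤ 1 ∧ 0 ≤ a ∧ ρ a = ε ∧
      ∀ t, 1 ≤ t →
        ∏ i ∈ Finset.Icc t (t + M),
          (1 - ρ (if r i = v i then a else ‖v i - v (i - 1)‖)) ≤ 1 - ε := by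
  have hlam₂ : 0 < lam₂ := hlam₁.trans_le hlam₁₂
  have hp0 : 0 < lam₃ / lam₂ := div_pos hlam₃0 hlam₂
  have hp1 : lam₃ / lam₂ ≤ 1 := (div_le_one hlam₂).2 hlam₃
  have hcontr (i : ℕ) : V (x (i + 1)) (v i) ≤ (1 - lam₃ / lam₂) * V (x i) (v i) :=
    le_one_sub_div_mul_of_le_sub hlam₂ hlam₃0.le (by simpa using hdec (i + 1) (by omega))
      (hVbnd i _ (hvSv i)).2
  have hupdate (i : ℕ) :
      V (x (i + 1)) (v (i + 1)) ≤ V (x (i + 1)) (v i) + lV * ‖v (i + 1) - v i‖ := by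
    linarith [le_abs_self (V (x (i + 1)) (v (i + 1)) - V (x (i + 1)) (v i)),
      hVLip (i + 1) (by omega) _ (hvSv (i + 1)) _ (hvSv i)]
  obtain ⟨β, hβ, M, hdecay, hβlh⟩ := exists_step_and_horizon (B := Vbar) hp0 hp1 hlV hlh
    (mul_pos hlam₁ (half_pos hδ)) (half_pos hδ)
  refine ⟨M, ρ β, β, ?_, (hρrange β hβ.le).2, hβ.le, rfl, fun t ht => ?_⟩
  · simpa [hρ0] using hρmono Set.self_mem_Ici hβ.le hβ
  obtain ⟨s, rfl⟩ : ∃ s, t = s + 1 := ⟨t - 1, by omega⟩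
  obtain ⟨i, hi, hacc⟩ : ∃ i ∈ Icc (s + 1) (s + 1 + M), r i = v i ∨ β ≤ ‖v i - v (i - 1)‖ := by
    by_contra! hsmall
    have hstep (k : ℕ) (hk : k ≤ M) : r (s + k + 1) ≠ v (s + k + 1) ∧
        ‖v (s + k + 1) - v (s + k)‖ < β := by
      simpa using hsmall (s + k + 1) (mem_Icc.2 ⟨by omega, by omega⟩)
    rcases hRG (s + M + 1) (by omega) with ⟨-, hvr⟩ | ⟨hrO, hsup⟩
    · exact (hstep M le_rfl).1 hvr.symm
    have hV := lyapunov_le_of_small_steps (B := Vbar) hp0 hp1 hlV.le hβ.le (hVub s) hcontr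
      hupdate fun k hk => (hstep k hk.le).2.le
    have hnear : ‖x (s + M + 1) - h (v (s + M))‖ ≤ δ / 2 :=
      le_of_mul_le_mul_left (by linarith [(hVbnd (s + M + 1) _ (hvSv (s + M))).1]) hlam₁
    have hβν := le_csSup (bddAbove_admissibleRadii (hrSv _) hrO)
      (mem_admissibleRadii hball hhLip hlh.le (hxX _) (hvSv _) hβ.le (by linarith))
    simp only [Nat.add_sub_cancel] at hsup
    exact (hβν.trans hsup).not_gt (hstep M le_rfl).2
  refine prod_one_sub_le_one_sub_of_le hρmono.monotoneOn hρrange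
    (fun j _ => by split_ifs <;> positivity) hi hβ.le ?_
  split_ifs with hrv
  exacts [le_rfl, hacc.resolve_left hrv]

/-- Lemma 3 of the paper: an average contraction property for any reference governor
satisfying Assumptions 4 and 5, along the closed-loop trajectory. Here `α_i = ρ⁻¹(ε)` if
`r_i = v_i` (the witness `a ≥ 0` with `ρ a = ε`) and `α_i = ‖v_i − v_{i−1}‖` otherwise. -/
theorem stmt10 {n o : ℕ} (Sv : Set (EuclideanSpace ℝ (Fin o))) (hSv : IsCompact Sv)
    (X : Set (EuclideanSpace ℝ (Fin n)))
    (O : Set (EuclideanSpace ℝ (Fin n) × EuclideanSpace ℝ (Fin o)))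
    (h : EuclideanSpace ℝ (Fin o) → EuclideanSpace ℝ (Fin n)) (lh : ℝ) (hlh : 0 < lh)
    (hhLip : ∀ u ∈ Sv, ∀ w ∈ Sv, ‖h u - h w‖ ≤ lh * ‖u - w‖)
    (δ : ℝ) (hδ : 0 < δ)
    (hball : ∀ v ∈ Sv, ∀ x ∈ X, ‖x - h v‖ ≤ δ → (x, v) ∈ O)
    (ρ : ℝ → ℝ) (hρcont : ContinuousOn ρ (Set.Ici 0)) (hρmono : StrictMonoOn ρ (Set.Ici 0))
    (hρ0 : ρ 0 = 0) (hρrange : ∀ s, 0 ≤ s → 0 ≤ ρ s ∧ ρ s ≤ 1)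
    (V : EuclideanSpace ℝ (Fin n) → EuclideanSpace ℝ (Fin o) → ℝ)
    (lam₁ lam₂ lam₃ lV Vbar : ℝ) (hlam₁ : 0 < lam₁) (hlam₁₂ : lam₁ ≤ lam₂)
    (hlam₃0 : 0 < lam₃) (hlam₃ : lam₃ ≤ lam₂) (hlV : 0 < lV) (hVbar : 0 < Vbar)
    (x : ℕ → EuclideanSpace ℝ (Fin n)) (v r : ℕ → EuclideanSpace ℝ (Fin o))
    (hxX : ∀ t, x t ∈ X) (hvSv : ∀ t, v t ∈ Sv) (hrSv : ∀ t, r t ∈ Sv)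
    (hO : ∀ t, (x t, v t) ∈ O)
    (hVbnd : ∀ t, ∀ w ∈ Sv, lam₁ * ‖x t - h w‖ ≤ V (x t) w ∧ V (x t) w ≤ lam₂ * ‖x t - h w‖)
    (hVub : ∀ t, V (x t) (v t) ≤ Vbar)
    (hdec : ∀ t, 1 ≤ t →
      V (x t) (v (t - 1)) ≤ V (x (t - 1)) (v (t - 1)) - lam₃ * ‖x (t - 1) - h (v (t - 1))‖)
    (hVLip : ∀ t, 1 ≤ t → ∀ u ∈ Sv, ∀ w ∈ Sv, |V (x t) u - V (x t) w| ≤ lV * ‖u - w‖)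
    (hRG : ∀ t, 1 ≤ t →
      ((x t, r t) ∈ O ∧ v t = r t) ∨
      ((x t, r t) ∉ O ∧
        sSup {ν : ℝ | 0 ≤ ν ∧ ∀ w ∈ Sv, ‖w - v (t - 1)‖ ≤ ν → (x t, w) ∈ O} ≤
          ‖v t - v (t - 1)‖)) :
    ∃ (M : ℕ) (ε a : ℝ), 0 < ε ∧ ε ≤ 1 ∧ 0 ≤ a ∧ ρ a = ε ∧
      ∀ t, 1 ≤ t →
        ∏ i ∈ Finset.Icc t (t + M),
          (1 - ρ (if r i = v i then a else ‖v i - v (i - 1)‖)) ≤ 1 - ε :=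
  stmt10_general Sv X O h lh hlh hhLip δ hδ hball ρ hρmono hρ0 hρrange V lam₁ lam₂ lam₃ lV Vbar
    hlam₁ hlam₁₂ hlam₃0 hlam₃ hlV x v r hxX hvSv hrSv hVbnd hVub hdec hVLip hRG
end

section
/- Let M ∈ ℕ, ε ∈ (0,1], and let (c_i)_{i≥1} be a sequence in [0,1] such that Π_{i=t}^{t+M} c_i ≤ 1 − ε for every t ≥ 1. Then for every t ≥ 1 and every K ≥ t: Σ_{k=t}^{K} Π_{i=t}^{k} c_i ≤ (M+1)/ε. -/
open Finset

private lemma stmt11_small (M : ℕ) (ε : ℝ) (hε0 : 0 < ε) (hε1 : ε ≤ 1) (c : ℕ → ℝ)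
    (hc : ∀ i, 1 ≤ i → 0 ≤ c i ∧ c i ≤ 1) (t K : ℕ) (ht : 1 ≤ t) (hK : K ≤ t + M) :
    ∑ k ∈ Finset.Icc t K, ∏ i ∈ Finset.Icc t k, c i ≤ ((M : ℝ) + 1) := by
  calc ∑ k ∈ Finset.Icc t K, ∏ i ∈ Finset.Icc t k, c i
      ≤ ∑ k ∈ Finset.Icc t K, (1 : ℝ) := by
        apply Finset.sum_le_sum
        intro k hk
        apply Finset.prod_le_one
        · intro i hi
          exact (hc i (le_trans ht (Finset.mem_Icc.mp hi).1)).1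
        · intro i hi
          exact (hc i (le_trans ht (Finset.mem_Icc.mp hi).1)).2
    _ = ((Finset.Icc t K).card : ℝ) := by simp
    _ ≤ ((M : ℝ) + 1) := by
        rw [Nat.card_Icc]
        have : K + 1 - t ≤ M + 1 := by omega
        exact_mod_cast this

private lemma stmt11_union (a b d : ℕ) (h1 : a ≤ b) (h2 : b ≤ d) :
    Finset.Icc a b ∪ Finset.Ioc b d = Finset.Icc a d := by
  ext x
  simp only [Finset.mem_union, Finset.mem_Icc, Finset.mem_Ioc]
  omega

private lemma stmt11_aux (M : ℕ) (ε : ℝ) (hε0 : 0 < ε) (hε1 : ε ≤ 1) (c : ℕ → ℝ)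
    (hc : ∀ i, 1 ≤ i → 0 ≤ c i ∧ c i ≤ 1)
    (hprod : ∀ t, 1 ≤ t → ∏ i ∈ Finset.Icc t (t + M), c i ≤ 1 - ε) :
    ∀ n t K, 1 ≤ t → t ≤ K → K - t ≤ n →
      ∑ k ∈ Finset.Icc t K, ∏ i ∈ Finset.Icc t k, c i ≤ ((M : ℝ) + 1) / ε := by
  have hM1 : (0:ℝ) ≤ (M:ℝ) + 1 := by positivity
  have hsmall : ∀ t K, 1 ≤ t → K ≤ t + M →
      ∑ k ∈ Finset.Icc t K, ∏ i ∈ Finset.Icc t k, c i ≤ ((M : ℝ) + 1) / ε := by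
    intro t K ht hK
    refine le_trans (stmt11_small M ε hε0 hε1 c hc t K ht hK) ?_
    rw [le_div_iff₀ hε0]
    nlinarith
  intro n
  induction n with
  | zero =>
    intro t K ht htK hn
    exact hsmall t K ht (by omega)
  | succ n IH =>
    intro t K ht htK hn
    by_cases hK : K ≤ t + M
    · exact hsmall t K ht hK
    push_neg at hK
    have h1 : t ≤ t + M := by omega
    have h2 : t + M ≤ K := by omega
    have hdisj : Disjoint (Finset.Icc t (t + M)) (Finset.Ioc (t + M) K) := by
      rw [Finset.disjoint_left]
      intro a ha hb
      rw [Finset.mem_Icc] at ha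
      rw [Finset.mem_Ioc] at hb
      omega
    rw [← stmt11_union t (t+M) K h1 h2, Finset.sum_union hdisj]
    have hsplit : ∀ k ∈ Finset.Ioc (t + M) K,
        ∏ i ∈ Finset.Icc t k, c i
          ≤ (1 - ε) * ∏ i ∈ Finset.Ioc (t + M) k, c i := by
      intro k hk
      rw [Finset.mem_Ioc] at hk
      have : Finset.Icc t k = Finset.Icc t (t + M) ∪ Finset.Ioc (t + M) k :=
        (stmt11_union t (t+M) k h1 (le_of_lt hk.1)).symm
      rw [this, Finset.prod_union]
      · apply mul_le_mul_of_nonneg_right (hprod t ht)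
        apply Finset.prod_nonneg
        intro i hi
        rw [Finset.mem_Ioc] at hi
        exact (hc i (by omega)).1
      · rw [Finset.disjoint_left]
        intro a ha hb
        rw [Finset.mem_Icc] at ha
        rw [Finset.mem_Ioc] at hb
        omega
    have hIH : ∑ k ∈ Finset.Ioc (t + M) K, ∏ i ∈ Finset.Ioc (t + M) k, c i
        ≤ ((M : ℝ) + 1) / ε := by
      have e : Finset.Ioc (t + M) K = Finset.Icc (t + M + 1) K := by
        rw [Finset.Icc_add_one_left_eq_Ioc]
      have e2 : ∀ k, Finset.Ioc (t + M) k = Finset.Icc (t + M + 1) k := by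
        intro k; rw [Finset.Icc_add_one_left_eq_Ioc]
      rw [e]
      simp_rw [e2]
      exact IH (t + M + 1) K (by omega) (by omega) (by omega)
    have hsum2 : ∑ k ∈ Finset.Ioc (t + M) K, ∏ i ∈ Finset.Icc t k, c i
        ≤ (1 - ε) * (((M : ℝ) + 1) / ε) := by
      calc ∑ k ∈ Finset.Ioc (t + M) K, ∏ i ∈ Finset.Icc t k, c i
          ≤ ∑ k ∈ Finset.Ioc (t + M) K, (1 - ε) * ∏ i ∈ Finset.Ioc (t + M) k, c i :=
            Finset.sum_le_sum hsplit
        _ = (1 - ε) * ∑ k ∈ Finset.Ioc (t + M) K, ∏ i ∈ Finset.Ioc (t + M) k, c i := by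
            rw [Finset.mul_sum]
        _ ≤ (1 - ε) * (((M : ℝ) + 1) / ε) := by
            apply mul_le_mul_of_nonneg_left hIH (by linarith)
    have h3 := stmt11_small M ε hε0 hε1 c hc t (t + M) ht (le_refl _)
    have key : ((M : ℝ) + 1) + (1 - ε) * (((M : ℝ) + 1) / ε) = ((M : ℝ) + 1) / ε := by
      field_simp
      ring
    linarith

/-- Geometric tail bound for products with a uniform window-contraction property: the key
summation estimate used in the proof of Theorem 1 of the paper. -/
theorem stmt11 (M : ℕ) (ε : ℝ) (hε0 : 0 < ε) (hε1 : ε ≤ 1) (c : ℕ → ℝ)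
    (hc : ∀ i, 1 ≤ i → 0 ≤ c i ∧ c i ≤ 1)
    (hprod : ∀ t, 1 ≤ t → ∏ i ∈ Finset.Icc t (t + M), c i ≤ 1 - ε) :
    ∀ t K, 1 ≤ t → t ≤ K →
      ∑ k ∈ Finset.Icc t K, ∏ i ∈ Finset.Icc t k, c i ≤ ((M : ℝ) + 1) / ε := by
  intro t K ht htK
  exact stmt11_aux M ε hε0 hε1 c hc hprod (K - t) t K ht htK le_rfl
end

section
/- Let M ∈ ℕ and ε ∈ (0,1]. Let (a_t)_{t≥0} and (b_t)_{t≥1} be nonnegative real sequences and (β_t)_{t≥1} a sequence in [0,1] such that a_0 = 0, a_t ≤ β_t·(a_{t−1} + b_t) for all t ≥ 1, and Π_{i=t}^{t+M} β_i ≤ 1 − ε for all t ≥ 1. Then for every T ∈ ℕ: Σ_{t=0}^{T} a_t ≤ ((M+1)/ε)·Σ_{t=1}^{T} b_t. -/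
open Finset

private lemma prod_split13 (β : ℕ → ℝ) {s m t : ℕ} (hsm : s ≤ m + 1) (hmt : m ≤ t) :
    ∏ i ∈ Icc s t, β i = (∏ i ∈ Icc s m, β i) * ∏ i ∈ Icc (m + 1) t, β i := by
  have hset : Icc s m ∪ Icc (m + 1) t = Icc s t := by
    ext x; simp only [Finset.mem_union, Finset.mem_Icc]; omega
  have hdis : Disjoint (Icc s m) (Icc (m + 1) t) := by
    simp only [Finset.disjoint_left, Finset.mem_Icc]; omega
  rw [← hset, Finset.prod_union hdis]

private lemma sum_prod_le13 (M : ℕ) (ε : ℝ) (hε0 : 0 < ε) (hε1 : ε ≤ 1) (β : ℕ → ℝ)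
    (hβ : ∀ t, 1 ≤ t → 0 ≤ β t ∧ β t ≤ 1)
    (hprod : ∀ t, 1 ≤ t → ∏ i ∈ Finset.Icc t (t + M), β i ≤ 1 - ε) :
    ∀ n s T, 1 ≤ s → T ≤ s + n →
      ∑ t ∈ Icc s T, ∏ i ∈ Icc s t, β i ≤ ((M : ℝ) + 1) / ε := by
  intro n
  induction n using Nat.strong_induction_on with
  | _ n ih =>
    intro s T hs hT
    have hPnn : ∀ u t, 1 ≤ u → 0 ≤ ∏ i ∈ Icc u t, β i := fun u t hu =>
      Finset.prod_nonneg (fun i hi => (hβ i (le_trans hu (Finset.mem_Icc.mp hi).1)).1)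
    have hPle1 : ∀ u t, 1 ≤ u → ∏ i ∈ Icc u t, β i ≤ 1 := fun u t hu =>
      Finset.prod_le_one (fun i hi => (hβ i (le_trans hu (Finset.mem_Icc.mp hi).1)).1)
        (fun i hi => (hβ i (le_trans hu (Finset.mem_Icc.mp hi).1)).2)
    have hfirst : ∀ T', T' ≤ s + M → ∑ t ∈ Icc s T', ∏ i ∈ Icc s t, β i ≤ (M : ℝ) + 1 := by
      intro T' hT'
      calc ∑ t ∈ Icc s T', ∏ i ∈ Icc s t, β i
          ≤ ∑ _t ∈ Icc s T', (1 : ℝ) :=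
            Finset.sum_le_sum (fun t _ => hPle1 s t hs)
        _ = ((Icc s T').card : ℝ) := by simp
        _ ≤ (M : ℝ) + 1 := by
            rw [Nat.card_Icc]
            have : T' + 1 - s ≤ M + 1 := by omega
            exact_mod_cast this
    have hM1ε : ((M : ℝ) + 1) ≤ ((M : ℝ) + 1) / ε := by
      rw [le_div_iff₀ hε0]
      nlinarith [Nat.cast_nonneg (α := ℝ) M]
    by_cases hcase : T ≤ s + M
    · exact le_trans (hfirst T hcase) hM1ε
    · push_neg at hcase
      have hsplit : Icc s T = Icc s (s + M) ∪ Icc (s + M + 1) T := by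
        ext x; simp only [Finset.mem_union, Finset.mem_Icc]; omega
      have hdis : Disjoint (Icc s (s + M)) (Icc (s + M + 1) T) := by
        simp only [Finset.disjoint_left, Finset.mem_Icc]; omega
      rw [hsplit, Finset.sum_union hdis]
      have hrw : ∑ t ∈ Icc (s + M + 1) T, ∏ i ∈ Icc s t, β i
          = (∏ i ∈ Icc s (s + M), β i) * ∑ t ∈ Icc (s + M + 1) T, ∏ i ∈ Icc (s + M + 1) t, β i := by
        rw [Finset.mul_sum]
        refine Finset.sum_congr rfl fun t ht => ?_
        have := (Finset.mem_Icc.mp ht).1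
        exact prod_split13 β (by omega) (by omega)
      rw [hrw]
      have hihsum : ∑ t ∈ Icc (s + M + 1) T, ∏ i ∈ Icc (s + M + 1) t, β i ≤ ((M : ℝ) + 1) / ε := by
        refine ih (n - (M + 1)) (by omega) (s + M + 1) T (by omega) (by omega)
      have hsumnn : 0 ≤ ∑ t ∈ Icc (s + M + 1) T, ∏ i ∈ Icc (s + M + 1) t, β i :=
        Finset.sum_nonneg fun t _ => hPnn (s + M + 1) t (by omega)
      have h2 : (∏ i ∈ Icc s (s + M), β i) *
            ∑ t ∈ Icc (s + M + 1) T, ∏ i ∈ Icc (s + M + 1) t, β i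
          ≤ (1 - ε) * (((M : ℝ) + 1) / ε) := by
        apply mul_le_mul (hprod s hs) hihsum hsumnn (by linarith)
      have hkey : ((M : ℝ) + 1) + (1 - ε) * (((M : ℝ) + 1) / ε) = ((M : ℝ) + 1) / ε := by
        field_simp
        ring
      linarith [hfirst (s + M) (le_refl _)]

/-- The combined estimate (eq. vt-rt in the proof of Theorem 1 of the paper): the accumulated
deviation `Σ a_t` is bounded linearly by the path length `Σ b_t`. -/
theorem stmt13 (M : ℕ) (ε : ℝ) (hε0 : 0 < ε) (hε1 : ε ≤ 1) (a b β : ℕ → ℝ)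
    (ha : ∀ t, 0 ≤ a t) (hb : ∀ t, 1 ≤ t → 0 ≤ b t)
    (hβ : ∀ t, 1 ≤ t → 0 ≤ β t ∧ β t ≤ 1)
    (ha0 : a 0 = 0)
    (hrec : ∀ t, 1 ≤ t → a t ≤ β t * (a (t - 1) + b t))
    (hprod : ∀ t, 1 ≤ t → ∏ i ∈ Finset.Icc t (t + M), β i ≤ 1 - ε) :
    ∀ T : ℕ, ∑ t ∈ Finset.range (T + 1), a t ≤
      ((M : ℝ) + 1) / ε * ∑ t ∈ Finset.Icc 1 T, b t := by
  -- unrolling lemma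
  have unroll : ∀ t, 1 ≤ t → a t ≤ ∑ s ∈ Icc 1 t, (∏ i ∈ Icc s t, β i) * b s := by
    intro t ht
    induction t, ht using Nat.le_induction with
    | base =>
      have := hrec 1 le_rfl
      simp only [Nat.sub_self, ha0, zero_add] at this
      simpa using this
    | succ t ht ihp =>
      have hβt := hβ (t + 1) (by omega)
      have hstep := hrec (t + 1) (by omega)
      simp only [Nat.add_sub_cancel] at hstep
      have h1 : a (t + 1) ≤ β (t + 1) * (∑ s ∈ Icc 1 t, (∏ i ∈ Icc s t, β i) * b s)
          + β (t + 1) * b (t + 1) := by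
        have := mul_le_mul_of_nonneg_left (add_le_add_right ihp (b (t + 1))) hβt.1
        nlinarith [this]
      rw [Finset.sum_Icc_succ_top (by omega : 1 ≤ t + 1)]
      have hb1 : β (t + 1) * (∑ s ∈ Icc 1 t, (∏ i ∈ Icc s t, β i) * b s)
          = ∑ s ∈ Icc 1 t, (∏ i ∈ Icc s (t + 1), β i) * b s := by
        rw [Finset.mul_sum]
        refine Finset.sum_congr rfl fun s hs => ?_
        have hs1 := (Finset.mem_Icc.mp hs).1
        have hs2 := (Finset.mem_Icc.mp hs).2
        rw [prod_split13 β (by omega : s ≤ t + 1) (by omega : t ≤ t + 1)]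
        have : ∏ i ∈ Icc (t + 1) (t + 1), β i = β (t + 1) := by simp
        rw [this]; ring
      have hb2 : (∏ i ∈ Icc (t + 1) (t + 1), β i) * b (t + 1) = β (t + 1) * b (t + 1) := by
        simp
      rw [← hb1, hb2]
      exact h1
  intro T
  have hsplit0 : ∑ t ∈ Finset.range (T + 1), a t = a 0 + ∑ t ∈ Icc 1 T, a t := by
    rw [Finset.range_eq_Ico, Finset.sum_eq_sum_Ico_succ_bot (by omega)]
    congr 1
  rw [hsplit0, ha0, zero_add]
  have step1 : ∑ t ∈ Icc 1 T, a t ≤ ∑ t ∈ Icc 1 T, ∑ s ∈ Icc 1 t, (∏ i ∈ Icc s t, β i) * b s :=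
    Finset.sum_le_sum fun t ht => unroll t (Finset.mem_Icc.mp ht).1
  have step2 : ∑ t ∈ Icc 1 T, ∑ s ∈ Icc 1 t, (∏ i ∈ Icc s t, β i) * b s
      = ∑ s ∈ Icc 1 T, ∑ t ∈ Icc s T, (∏ i ∈ Icc s t, β i) * b s := by
    have h := Finset.sum_Ico_Ico_comm 1 (T + 1) (fun s t => (∏ i ∈ Icc s t, β i) * b s)
    have e1 : Icc 1 T = Ico 1 (T + 1) := by rw [Finset.Ico_add_one_right_eq_Icc]
    rw [e1]
    calc ∑ t ∈ Ico 1 (T + 1), ∑ s ∈ Icc 1 t, (∏ i ∈ Icc s t, β i) * b s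
        = ∑ t ∈ Ico 1 (T + 1), ∑ s ∈ Ico 1 (t + 1), (∏ i ∈ Icc s t, β i) * b s := by
          refine Finset.sum_congr rfl fun t _ => by rw [Finset.Ico_add_one_right_eq_Icc]
      _ = ∑ s ∈ Ico 1 (T + 1), ∑ t ∈ Ico s (T + 1), (∏ i ∈ Icc s t, β i) * b s := h.symm
      _ = ∑ s ∈ Ico 1 (T + 1), ∑ t ∈ Icc s T, (∏ i ∈ Icc s t, β i) * b s := by
          refine Finset.sum_congr rfl fun s _ => by rw [Finset.Ico_add_one_right_eq_Icc]
  have step3 : ∀ s ∈ Icc 1 T, ∑ t ∈ Icc s T, (∏ i ∈ Icc s t, β i) * b s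
      ≤ ((M : ℝ) + 1) / ε * b s := by
    intro s hs
    obtain ⟨hs1, hs2⟩ := Finset.mem_Icc.mp hs
    rw [← Finset.sum_mul]
    apply mul_le_mul_of_nonneg_right _ (hb s hs1)
    exact sum_prod_le13 M ε hε0 hε1 β hβ hprod (T - s) s T hs1 (by omega)
  calc ∑ t ∈ Icc 1 T, a t
      ≤ ∑ s ∈ Icc 1 T, ∑ t ∈ Icc s T, (∏ i ∈ Icc s t, β i) * b s := by rw [← step2]; exact step1
    _ ≤ ∑ s ∈ Icc 1 T, ((M : ℝ) + 1) / ε * b s := Finset.sum_le_sum step3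
    _ = ((M : ℝ) + 1) / ε * ∑ t ∈ Icc 1 T, b t := by rw [Finset.mul_sum]
end

section
/- Let h : ℝ^o → ℝⁿ be l_h-Lipschitz (l_h > 0), let V be a real-valued function of (x,v), let 0 < λ₁ ≤ λ₂ and μ > 0, and let x ∈ ℝⁿ, w, ν ∈ ℝ^o be such that λ₁‖x − h(w)‖ ≤ V(x,w) and V(x,ν) ≤ λ₂‖x − h(ν)‖. If V(x,w) ≤ λ₁μ/(2λ₂) and ‖ν − w‖ ≤ μ/(2λ₂l_h), then V(x,ν) ≤ μ. -/
/-- The neighborhood transfer estimate for Lyapunov sublevel sets from Case 2 of the proof of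
Lemma 3 of the paper: a state whose Lyapunov value for reference `w` is at most `λ₁μ/(2λ₂)`
remains in the `μ`-sublevel set for any reference `ν` with `‖ν − w‖ ≤ μ/(2λ₂l_h)`. -/
theorem stmt19 {n o : ℕ}
    (h : EuclideanSpace ℝ (Fin o) → EuclideanSpace ℝ (Fin n))
    (lh : ℝ) (hlh : 0 < lh)
    (hhLip : ∀ u w : EuclideanSpace ℝ (Fin o), ‖h u - h w‖ ≤ lh * ‖u - w‖)
    (V : EuclideanSpace ℝ (Fin n) → EuclideanSpace ℝ (Fin o) → ℝ)
    (lam₁ lam₂ μ : ℝ) (hlam₁ : 0 < lam₁) (hlam₁₂ : lam₁ ≤ lam₂) (hμ : 0 < μ)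
    (x : EuclideanSpace ℝ (Fin n)) (w ν : EuclideanSpace ℝ (Fin o))
    (hlb : lam₁ * ‖x - h w‖ ≤ V x w) (hub : V x ν ≤ lam₂ * ‖x - h ν‖)
    (h1 : V x w ≤ lam₁ * μ / (2 * lam₂)) (h2 : ‖ν - w‖ ≤ μ / (2 * lam₂ * lh)) :
    V x ν ≤ μ := by
  have hlam₂ : 0 < lam₂ := lt_of_lt_of_le hlam₁ hlam₁₂
  have h3 : ‖x - h w‖ ≤ μ / (2 * lam₂) := by
    have := hlb.trans h1
    rw [le_div_iff₀ (by positivity : (0:ℝ) < 2 * lam₂)] at this ⊢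
    nlinarith
  have h4 : ‖h w - h ν‖ ≤ μ / (2 * lam₂) := by
    calc ‖h w - h ν‖ ≤ lh * ‖w - ν‖ := hhLip w ν
    _ = lh * ‖ν - w‖ := by rw [norm_sub_rev]
    _ ≤ lh * (μ / (2 * lam₂ * lh)) := by nlinarith
    _ = μ / (2 * lam₂) := by field_simp
  have h5 : ‖x - h ν‖ ≤ μ / lam₂ := by
    calc ‖x - h ν‖ ≤ ‖x - h w‖ + ‖h w - h ν‖ := by
          simpa using norm_sub_le_norm_sub_add_norm_sub x (h w) (h ν)
    _ ≤ μ / (2 * lam₂) + μ / (2 * lam₂) := add_le_add h3 h4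
    _ = μ / lam₂ := by field_simp; ring
  calc V x ν ≤ lam₂ * ‖x - h ν‖ := hub
  _ ≤ lam₂ * (μ / lam₂) := by nlinarith
  _ = μ := by field_simp
end
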